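/- arXiv:1203.2473 — 4 statements merged into one kernel-verified Lean document; each statement's English description precedes it below -/
import Mathlib

section
/- For squarefree n with prime factorization p₁⋯p_m, the unitary Cayley graph X_n is isomorphic to the tensor product of the complete graphs K_{p₁}, …, K_{p_m}. -/
/-! A ring isomorphism preserves units, so `X_n` only depends on the ring `ZMod n`. For squarefree
`n` the Chinese remainder theorem identifies `ZMod n` with the product of the fields `ZMod p`,
`p ∣ n`, where an element is a unit iff all of its coordinates are nonzero. Hence `a - b` is a unit
iff `a` and `b` differ in every coordinate, which is adjacency in the tensor product of the
complete graphs `K_p`. -/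

def unitaryCayley (n : ℕ) : SimpleGraph (ZMod n) where
  Adj a b := a ≠ b ∧ IsUnit (a - b)
  symm := by
    constructor
    rintro a b ⟨hne, hu⟩
    exact ⟨hne.symm, by rw [show b - a = -(a - b) by ring]; exact hu.neg⟩
  loopless := ⟨fun a h => h.1 rfl⟩

def tensorPi {ι : Type*} {V : ι → Type*} (H : ∀ i, SimpleGraph (V i)) :
    SimpleGraph (∀ i, V i) where
  Adj x y := x ≠ y ∧ ∀ i, (H i).Adj (x i) (y i)
  symm := ⟨fun _ _ ⟨hne, h⟩ => ⟨hne.symm, fun i => (h i).symm⟩⟩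
  loopless := ⟨fun _ h => h.1 rfl⟩

def unitaryCayleyGraph (R : Type*) [Ring R] : SimpleGraph R where
  Adj a b := a ≠ b ∧ IsUnit (a - b)
  symm := ⟨fun _ _ h => ⟨h.1.symm, by simpa only [neg_sub] using h.2.neg⟩⟩
  loopless := ⟨fun _ h => h.1 rfl⟩

theorem unitaryCayley_eq_unitaryCayleyGraph (n : ℕ) :
    unitaryCayley n = unitaryCayleyGraph (ZMod n) :=
  rfl

def RingEquiv.unitaryCayleyGraphIso {R S : Type*} [Ring R] [Ring S] (e : R ≃+* S) :
    unitaryCayleyGraph R ≃g unitaryCayleyGraph S where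
  toEquiv := e.toEquiv
  map_rel_iff' := by simp [unitaryCayleyGraph, ← map_sub]

theorem unitaryCayleyGraph_pi_eq_tensorPi_top {ι : Type*} {K : ι → Type*}
    [∀ i, DivisionRing (K i)] :
    unitaryCayleyGraph (∀ i, K i) = tensorPi fun i => (⊤ : SimpleGraph (K i)) := by
  ext x y
  simp [unitaryCayleyGraph, tensorPi, Pi.isUnit_iff, sub_ne_zero]

noncomputable def ZMod.equivPiOfSquarefree {n : ℕ} (hn : Squarefree n) :
    ZMod n ≃+* ∀ p : n.primeFactors, ZMod (p : ℕ) :=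
  have hprod : n = ∏ p : n.primeFactors, (p : ℕ) := by
    rw [Finset.prod_coe_sort n.primeFactors fun p => p]
    exact (Nat.prod_primeFactors_of_squarefree hn).symm
  (ZMod.ringEquivCongr hprod).trans <| ZMod.prodEquivPi _ fun p q hpq =>
    (Nat.coprime_primes (Nat.prime_of_mem_primeFactors p.2)
      (Nat.prime_of_mem_primeFactors q.2)).mpr (Subtype.coe_ne_coe.mpr hpq)

theorem unitaryCayley_squarefree_iso (n : ℕ) (hn : Squarefree n) :
    Nonempty (unitaryCayley n ≃g
      tensorPi (fun p : n.primeFactors => (⊤ : SimpleGraph (ZMod (p : ℕ))))) := by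
  have (p : n.primeFactors) : Fact (p : ℕ).Prime := ⟨Nat.prime_of_mem_primeFactors p.2⟩
  rw [unitaryCayley_eq_unitaryCayleyGraph, ← unitaryCayleyGraph_pi_eq_tensorPi_top]
  exact ⟨(ZMod.equivPiOfSquarefree hn).unitaryCayleyGraphIso⟩
end

section
/- For every positive integer n, the unitary Cayley graph X_n is isomorphic to the blow-up of X_{rad(n)} of order n/rad(n). -/
def blowup {V : Type*} (G : SimpleGraph V) (r : ℕ) : SimpleGraph (V × Fin r) where
  Adj x y := G.Adj x.1 y.1
  symm := ⟨fun _ _ h => G.symm.symm _ _ h⟩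
  loopless := ⟨fun _ h => G.loopless.irrefl _ h⟩

def rad (n : ℕ) : ℕ := n.primeFactors.prod id

/-!
Reduction `ZMod n → ZMod (rad n)` is a surjective ring map, so all its fibres have size
`n / rad n`; and since `n` and `rad n` have the same prime factors, it detects units. Hence
adjacency in `X_n` is pulled back from `X_{rad n}`, which is exactly a blow-up.
-/

theorem Nat.coprime_iff_of_primeFactors_eq {k m n : ℕ} (hm : m ≠ 0) (hn : n ≠ 0)
    (h : m.primeFactors = n.primeFactors) : k.Coprime m ↔ k.Coprime n := by
  have hdvd : ∀ p, p.Prime → (p ∣ m ↔ p ∣ n) := fun p hp => by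
    simpa [Nat.mem_primeFactors, hp, hm, hn] using Finset.ext_iff.mp h p
  rw [← not_iff_not, Nat.Prime.not_coprime_iff_dvd, Nat.Prime.not_coprime_iff_dvd]
  exact exists_congr fun p => and_congr_right fun hp => and_congr_right fun _ => hdvd p hp

theorem ZMod.isUnit_castHom_iff {m n : ℕ} [NeZero n] (h : m ∣ n)
    (hpf : m.primeFactors = n.primeFactors) (x : ZMod n) :
    IsUnit (ZMod.castHom h (ZMod m) x) ↔ IsUnit x := by
  have hm : m ≠ 0 := by rintro rfl; exact NeZero.ne n (Nat.eq_zero_of_zero_dvd h)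
  rw [ZMod.castHom_apply, ← ZMod.natCast_val, ZMod.isUnit_iff_coprime,
    ← ZMod.natCast_zmod_val x, ZMod.isUnit_iff_coprime, ZMod.natCast_zmod_val]
  exact Nat.coprime_iff_of_primeFactors_eq hm (NeZero.ne n) hpf

theorem AddMonoidHom.natCard_fiber_mul_natCard {G H : Type*} [AddGroup G] [AddGroup H]
    {f : G →+ H} (hf : Function.Surjective f) (y : H) :
    Nat.card {x // f x = y} * Nat.card H = Nat.card G := by
  rw [← f.ker.card_mul_index, AddSubgroup.index_ker, AddMonoidHom.range_eq_top.mpr hf,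
    AddSubgroup.card_top]
  exact congrArg (· * Nat.card H) (Nat.card_congr (f.fiberEquivKerOfSurjective hf y))

theorem SimpleGraph.nonempty_iso_blowup {V W : Type*} [Finite V] {G : SimpleGraph V}
    {H : SimpleGraph W} {r : ℕ} (π : V → W) (hadj : ∀ a b, H.Adj (π a) (π b) ↔ G.Adj a b)
    (hfiber : ∀ w, Nat.card {v // π v = w} = r) : Nonempty (G ≃g blowup H r) :=
  ⟨⟨(Equiv.sigmaFiberEquiv π).symm.trans <|
      (Equiv.sigmaCongrRight fun w => Finite.equivFinOfCardEq (hfiber w)).trans <|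
        Equiv.sigmaEquivProd W (Fin r), hadj _ _⟩⟩

theorem unitaryCayley_adj_map_iff {m n : ℕ} (f : ZMod n →+* ZMod m)
    (hf : ∀ x, IsUnit (f x) ↔ IsUnit x) (a b : ZMod n) :
    (unitaryCayley m).Adj (f a) (f b) ↔ (unitaryCayley n).Adj a b := by
  change f a ≠ f b ∧ IsUnit (f a - f b) ↔ a ≠ b ∧ IsUnit (a - b)
  rw [← map_sub, hf]
  refine and_congr_left fun hunit => ⟨fun hne heq => hne (congrArg f heq), fun hne heq => hne ?_⟩
  -- `f a = f b` makes `0` a unit of `ZMod m`, hence (via `hf 0`) of `ZMod n`, which is then trivial.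
  have h0 : IsUnit (f 0) := by
    rw [map_zero, ← sub_eq_zero.mpr heq, ← map_sub]
    exact (hf _).mpr hunit
  rw [hf, isUnit_zero_iff] at h0
  exact @Subsingleton.elim _ (subsingleton_of_zero_eq_one h0) a b

theorem rad_dvd (n : ℕ) : rad n ∣ n := Nat.prod_primeFactors_dvd n

theorem primeFactors_rad (n : ℕ) : (rad n).primeFactors = n.primeFactors :=
  Nat.primeFactors_prod_primeFactors n

theorem unitaryCayley_iso_blowup (n : ℕ) (hn : 0 < n) :
    Nonempty (unitaryCayley n ≃g blowup (unitaryCayley (rad n)) (n / rad n)) := by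
  have : NeZero n := ⟨hn.ne'⟩
  set f := ZMod.castHom (rad_dvd n) (ZMod (rad n))
  refine SimpleGraph.nonempty_iso_blowup f
    (unitaryCayley_adj_map_iff f (ZMod.isUnit_castHom_iff (rad_dvd n) (primeFactors_rad n)))
    fun w => ?_
  have hcard := f.toAddMonoidHom.natCard_fiber_mul_natCard
    (ZMod.castHom_surjective (rad_dvd n)) w
  rw [Nat.card_zmod, Nat.card_zmod] at hcard
  exact Nat.eq_div_of_mul_eq_left (Nat.pos_of_dvd_of_pos (rad_dvd n) hn).ne' hcard
end

section
/- For positive integers n and k, the number of ordered k-tuples (u₁,…,u_k) of units of Z/nZ with u₁ + ⋯ + u_k ≡ 0 (mod n) equals (n/rad(n))^{k-1} · ∏_{p | n, p prime} (p-1)/p · ((p-1)^{k-1} - (-1)^{k-1}). -/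
/-!
Both sides are multiplicative in `n`: the left one by the Chinese remainder theorem, the right one
by inspection. Over a finite field with `q` elements, a tuple of units sums to zero iff its last
entry is minus the sum of the others, and that sum must then be a unit, i.e. nonzero; hence
`N(k + 1) + N(k) = (q - 1)^k`, which gives `N(k)` in closed form. For `n = p^a`, reduction modulo
`p` detects units, so the unit-sum condition on the first `k - 1` entries is pulled back from
`ZMod p` along a surjection whose fibres on `(ZMod (p^a))ˣ` all have `p^(a-1)` elements.
-/

open Finset

lemma MonoidHom.card_subtype_comp_eq_mul_card_ker {G H : Type*} [Group G] [Group H] {φ : G →* H}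
    (hφ : Function.Surjective φ) (P : H → Prop) :
    Nat.card {g // P (φ g)} = Nat.card {h // P h} * Nat.card φ.ker := by
  rw [← Nat.card_prod]
  exact Nat.card_congr <| (Equiv.sigmaSubtypeFiberEquivSubtype φ fun _ => Iff.rfl).symm.trans
    (Equiv.sigmaEquivProdOfEquiv fun h => MonoidHom.fiberEquivKerOfSurjective hφ h)

lemma MonoidHom.card_subtype_comp_mul_card {G H : Type*} [Group G] [Group H] {φ : G →* H}
    (hφ : Function.Surjective φ) (P : H → Prop) :
    Nat.card {g // P (φ g)} * Nat.card H = Nat.card {h // P h} * Nat.card G := by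
  have hG := φ.card_subtype_comp_eq_mul_card_ker hφ fun _ => True
  simp only [Nat.card_congr (Equiv.subtypeUnivEquiv fun _ => trivial)] at hG
  rw [φ.card_subtype_comp_eq_mul_card_ker hφ, hG]
  ring

section ZeroSumUnits

variable (R : Type*) [Ring R]

abbrev zeroSumUnits (k : ℕ) : Type _ := {u : Fin k → Rˣ // ∑ i, (u i : R) = 0}

noncomputable def zeroSumUnitsSuccEquiv (k : ℕ) :
    zeroSumUnits R (k + 1) ≃ {w : Fin k → Rˣ // IsUnit (∑ i, (w i : R))} where
  toFun u := ⟨fun i => u.1 i.castSucc, by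
    have hsum := u.2
    rw [Fin.sum_univ_castSucc] at hsum
    rw [eq_neg_of_add_eq_zero_left hsum]
    exact (u.1 (Fin.last k)).isUnit.neg⟩
  invFun w := ⟨Fin.snoc w.1 (-w.2.unit), by simp [Fin.sum_univ_castSucc]⟩
  left_inv u := by
    ext i : 2
    induction i using Fin.lastCases with
    | last =>
      have hsum := u.2
      rw [Fin.sum_univ_castSucc] at hsum
      ext
      simp [eq_neg_of_add_eq_zero_right hsum]
    | cast i => simp
  right_inv w := by ext i : 2; simp

lemma card_zeroSumUnits_zero : Nat.card (zeroSumUnits R 0) = 1 := by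
  rw [Nat.card_eq_one_iff_unique]
  exact ⟨inferInstance, ⟨⟨finZeroElim, by simp⟩⟩⟩

lemma card_zeroSumUnits_of_subsingleton [Subsingleton R] (k : ℕ) :
    Nat.card (zeroSumUnits R k) = 1 := by
  rw [Nat.card_eq_one_iff_unique]
  exact ⟨inferInstance, ⟨⟨1, Subsingleton.elim _ _⟩⟩⟩

end ZeroSumUnits

section Field

variable (F : Type*) [Field F] [Finite F]

lemma card_zeroSumUnits_succ_add (k : ℕ) :
    Nat.card (zeroSumUnits F (k + 1)) + Nat.card (zeroSumUnits F k) = (Nat.card F - 1) ^ k := by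
  classical
  have hunit : ∀ w : Fin k → Fˣ, IsUnit (∑ i, (w i : F)) ↔ ¬ ∑ i, (w i : F) = 0 :=
    fun _ => isUnit_iff_ne_zero
  rw [Nat.card_congr ((zeroSumUnitsSuccEquiv F k).trans (Equiv.subtypeEquivRight hunit)), add_comm,
    ← Nat.card_sum, Nat.card_congr (Equiv.sumCompl _), Nat.card_fun, Nat.card_units, Nat.card_fin]

lemma card_zeroSumUnits_of_field (k : ℕ) :
    (Nat.card (zeroSumUnits F k) : ℚ) =
      (((Nat.card F : ℚ) - 1) ^ k + (-1) ^ k * ((Nat.card F : ℚ) - 1)) / Nat.card F := by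
  have hq : (1 : ℚ) ≤ Nat.card F := by exact_mod_cast Nat.card_pos
  induction k with
  | zero => rw [card_zeroSumUnits_zero]; field_simp; ring
  | succ k ih =>
    have hrec := congrArg (Nat.cast : ℕ → ℚ) (card_zeroSumUnits_succ_add F k)
    push_cast [Nat.cast_sub (Nat.one_le_cast.mp hq)] at hrec
    rw [eq_sub_of_add_eq hrec, ih]
    field_simp
    ring

end Field

lemma card_zeroSumUnits_succ_mul_of_isLocalHom {R S : Type*} [Ring R] [Ring S] (f : R →+* S)
    [IsLocalHom f] (hf : Function.Surjective f) (m : ℕ) :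
    Nat.card (zeroSumUnits R (m + 1)) * Nat.card Sˣ ^ m =
      Nat.card (zeroSumUnits S (m + 1)) * Nat.card Rˣ ^ m := by
  set φ := MonoidHom.compLeft (Units.map (f : R →* S)) (Fin m)
  have hφ : Function.Surjective φ :=
    (IsLocalRing.surjective_units_map_of_local_ringHom f hf inferInstance).comp_left
  have hunit : ∀ w : Fin m → Rˣ,
      IsUnit (∑ i, (w i : R)) ↔ IsUnit (∑ i, (φ w i : S)) := fun w => by
    simp [φ, ← map_sum, isUnit_map_iff]
  rw [Nat.card_congr ((zeroSumUnitsSuccEquiv R m).trans (Equiv.subtypeEquivRight hunit)),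
    Nat.card_congr (zeroSumUnitsSuccEquiv S m)]
  simpa only [Nat.card_fun, Nat.card_fin] using
    φ.card_subtype_comp_mul_card hφ fun v => IsUnit (∑ i, (v i : S))

lemma card_zeroSumUnits_prod (R S : Type*) [Ring R] [Ring S] (k : ℕ) :
    Nat.card (zeroSumUnits (R × S) k) =
      Nat.card (zeroSumUnits R k) * Nat.card (zeroSumUnits S k) := by
  let e : (Fin k → (R × S)ˣ) ≃ (Fin k → Rˣ) × (Fin k → Sˣ) :=
    (Equiv.piCongrRight fun _ => MulEquiv.prodUnits.toEquiv).trans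
      (Equiv.arrowProdEquivProdArrow _ _ _)
  have hsum : ∀ u, ∑ i, (u i : R × S) = 0 ↔
      ∑ i, ((e u).1 i : R) = 0 ∧ ∑ i, ((e u).2 i : S) = 0 := fun u => by
    simp [e, Prod.ext_iff, Prod.fst_sum, Prod.snd_sum, MulEquiv.prodUnits]
  rw [← Nat.card_prod]
  exact Nat.card_congr ((Equiv.subtypeEquiv e hsum).trans (Equiv.subtypeProdEquivProd))

lemma card_zeroSumUnits_congr {R S : Type*} [Ring R] [Ring S] (e : R ≃+* S) (k : ℕ) :
    Nat.card (zeroSumUnits R k) = Nat.card (zeroSumUnits S k) := by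
  refine Nat.card_congr <| Equiv.subtypeEquiv
    (Equiv.piCongrRight fun _ => (Units.mapEquiv e.toMulEquiv).toEquiv) fun u => ?_
  simp [← map_sum]

namespace ZMod

lemma isLocalHom_castHom_prime_pow {p a : ℕ} (hp : p.Prime) (ha : a ≠ 0) :
    IsLocalHom (castHom (dvd_pow_self p ha) (ZMod p)) := by
  have : NeZero (p ^ a) := ⟨pow_ne_zero a hp.ne_zero⟩
  refine ⟨fun x hx => ?_⟩
  rw [← natCast_zmod_val x, map_natCast, isUnit_iff_coprime] at hx
  rw [← natCast_zmod_val x, isUnit_iff_coprime]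
  exact Nat.Coprime.pow_right a hx

lemma card_units_prime_pow {p a : ℕ} (hp : p.Prime) (ha : a ≠ 0) :
    Nat.card (ZMod (p ^ a))ˣ = p ^ (a - 1) * (p - 1) := by
  have : NeZero (p ^ a) := ⟨pow_ne_zero a hp.ne_zero⟩
  rw [Nat.card_eq_fintype_card, card_units_eq_totient,
    Nat.totient_prime_pow hp (Nat.pos_of_ne_zero ha)]

lemma card_zeroSumUnits_prime_pow {p a : ℕ} (hp : p.Prime) (ha : a ≠ 0) (m : ℕ) :
    (Nat.card (zeroSumUnits (ZMod (p ^ a)) (m + 1)) : ℚ) =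
      ((p : ℚ) ^ a / p) ^ m * (((p : ℚ) - 1) / p * (((p : ℚ) - 1) ^ m - (-1) ^ m)) := by
  have := isLocalHom_castHom_prime_pow hp ha
  have := Fact.mk hp
  have hcount := congrArg (Nat.cast : ℕ → ℚ) <|
    card_zeroSumUnits_succ_mul_of_isLocalHom _ (castHom_surjective (dvd_pow_self p ha)) m
  have hp1 : (p : ℚ) - 1 ≠ 0 := sub_ne_zero.mpr (by exact_mod_cast hp.ne_one)
  have hp0 : (p : ℚ) ≠ 0 := by exact_mod_cast hp.ne_zero
  rw [card_units_prime_pow hp ha, Nat.card_units, Nat.card_zmod] at hcount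
  push_cast [Nat.cast_sub hp.one_le, card_zeroSumUnits_of_field, Nat.card_zmod] at hcount
  rw [← mul_left_inj' (pow_ne_zero m hp1), hcount, ← pow_sub_one_mul ha,
    mul_div_cancel_right₀ _ hp0, mul_pow]
  field_simp
  ring

lemma card_zeroSumUnits_mul {a b : ℕ} (hab : a.Coprime b) (k : ℕ) :
    Nat.card (zeroSumUnits (ZMod (a * b)) k) =
      Nat.card (zeroSumUnits (ZMod a) k) * Nat.card (zeroSumUnits (ZMod b) k) :=
  (card_zeroSumUnits_congr (chineseRemainder hab) k).trans (card_zeroSumUnits_prod _ _ k)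

end ZMod

lemma rad_pos (n : ℕ) : 0 < rad n :=
  prod_pos fun _ hp => (Nat.prime_of_mem_primeFactors hp).pos

lemma rad_prime_pow {p a : ℕ} (hp : p.Prime) (ha : a ≠ 0) : rad (p ^ a) = p := by
  simp [rad, Nat.primeFactors_prime_pow ha hp]

lemma rad_mul {a b : ℕ} (ha : a ≠ 0) (hb : b ≠ 0) (hab : a.Coprime b) :
    rad (a * b) = rad a * rad b := by
  rw [rad, Nat.primeFactors_mul ha hb, prod_union hab.disjoint_primeFactors, rad, rad]

def zeroSumCountFormula (n m : ℕ) : ℚ :=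
  ((n : ℚ) / rad n) ^ m *
    ∏ p ∈ n.primeFactors, ((p : ℚ) - 1) / p * (((p : ℚ) - 1) ^ m - (-1) ^ m)

lemma zeroSumCountFormula_one (m : ℕ) : zeroSumCountFormula 1 m = 1 := by
  simp [zeroSumCountFormula, rad]

lemma zeroSumCountFormula_prime_pow {p a : ℕ} (hp : p.Prime) (ha : a ≠ 0) (m : ℕ) :
    zeroSumCountFormula (p ^ a) m =
      ((p : ℚ) ^ a / p) ^ m * (((p : ℚ) - 1) / p * (((p : ℚ) - 1) ^ m - (-1) ^ m)) := by
  simp [zeroSumCountFormula, rad_prime_pow hp ha, Nat.primeFactors_prime_pow ha hp]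

lemma zeroSumCountFormula_mul {a b : ℕ} (ha : a ≠ 0) (hb : b ≠ 0) (hab : a.Coprime b)
    (m : ℕ) :
    zeroSumCountFormula (a * b) m = zeroSumCountFormula a m * zeroSumCountFormula b m := by
  have hra : (rad a : ℚ) ≠ 0 := by exact_mod_cast (rad_pos a).ne'
  have hrb : (rad b : ℚ) ≠ 0 := by exact_mod_cast (rad_pos b).ne'
  rw [zeroSumCountFormula, zeroSumCountFormula, zeroSumCountFormula, Nat.primeFactors_mul ha hb,
    prod_union hab.disjoint_primeFactors, rad_mul ha hb hab]
  push_cast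
  rw [mul_div_mul_comm, mul_pow]
  ring

theorem homogeneous_unit_sums_count (n k : ℕ) (hn : 0 < n) (hk : 0 < k) :
    (Nat.card {u : Fin k → (ZMod n)ˣ // ∑ i, ((u i : ZMod n)) = 0} : ℚ) =
      ((n : ℚ) / rad n) ^ (k - 1) *
        ∏ p ∈ n.primeFactors,
          ((p : ℚ) - 1) / p * (((p : ℚ) - 1) ^ (k - 1) - (-1) ^ (k - 1)) := by
  obtain ⟨m, rfl⟩ : ∃ m, k = m + 1 := Nat.exists_eq_add_one.mpr hk
  change (Nat.card (zeroSumUnits (ZMod n) (m + 1)) : ℚ) = zeroSumCountFormula n m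
  induction n using Nat.recOnPosPrimePosCoprime with
  | zero => exact absurd hn (lt_irrefl 0)
  | one => rw [card_zeroSumUnits_of_subsingleton, zeroSumCountFormula_one, Nat.cast_one]
  | prime_pow p a hp ha =>
    rw [ZMod.card_zeroSumUnits_prime_pow hp ha.ne', zeroSumCountFormula_prime_pow hp ha.ne']
  | coprime a b ha hb hab iha ihb =>
    rw [ZMod.card_zeroSumUnits_mul hab, Nat.cast_mul, iha (by omega), ihb (by omega),
      zeroSumCountFormula_mul (by omega) (by omega) hab]
end

section
/- For positive integers n, k with n squarefree and r ∈ Z/nZ, the number of ordered k-tuples of units of Z/nZ summing to r equals ∏_{p|n, p|r} (p-1)/p·((p-1)^{k-1}-(-1)^{k-1}) · ∏_{p|n, p∤r} ((p-1)^k - (-1)^k)/p. -/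
/-!
Counting tuples of units with prescribed sum is multiplicative under products of rings, so the
Chinese remainder theorem `ZMod n ≃+* Π p ∣ n, ZMod p` for squarefree `n` reduces the count to
prime fields. Over a finite field with `q` elements, splitting off the first unit gives the
recursion `N (k + 1) r = ∑ x ≠ 0, N k (r - x)`, whose solution is
`N k r = ((q - 1) ^ k - (-1) ^ k) / q + (-1) ^ k [r = 0]`.
-/

open Finset

noncomputable def unitSumCount (R : Type*) [Semiring R] (k : ℕ) (r : R) : ℕ :=
  Nat.card {u : Fin k → Rˣ // ∑ i, (u i : R) = r}

section Semiring

variable {R : Type*} [Semiring R]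

theorem unitSumCount_zero [DecidableEq R] (r : R) :
    unitSumCount R 0 r = if r = 0 then 1 else 0 := by
  by_cases hr : r = 0
  · subst hr
    simp [unitSumCount]
  · simp [unitSumCount, hr, Ne.symm hr]

theorem unitSumCount_ringEquiv {S : Type*} [Semiring S] (e : R ≃+* S) (k : ℕ) (r : R) :
    unitSumCount S k (e r) = unitSumCount R k r := by
  refine Nat.card_congr (Equiv.subtypeEquiv
    (Equiv.arrowCongr (Equiv.refl _) (Units.mapEquiv e.toMulEquiv)).symm fun u => ?_)
  simp [← e.injective.eq_iff, map_sum]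

end Semiring

theorem unitSumCount_pi {ι : Type*} [Fintype ι] {R : ι → Type*} [∀ i, Semiring (R i)]
    (k : ℕ) (r : ∀ i, R i) :
    unitSumCount (∀ i, R i) k r = ∏ i, unitSumCount (R i) k (r i) := by
  let e : {u : Fin k → (∀ i, R i)ˣ // ∑ j, (u j : ∀ i, R i) = r} ≃
      {v : ∀ i, Fin k → (R i)ˣ // ∀ i, ∑ j, (v i j : R i) = r i} :=
    Equiv.subtypeEquiv ((Equiv.arrowCongr (Equiv.refl _) MulEquiv.piUnits.toEquiv).trans
      (Equiv.piComm _)) fun u => by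
        simp only [funext_iff, Finset.sum_apply]
        exact Iff.rfl
  exact (Nat.card_congr (e.trans (Equiv.subtypePiEquivPi
    (p := fun i (w : Fin k → (R i)ˣ) => ∑ j, (w j : R i) = r i)))).trans Nat.card_pi

theorem unitSumCount_succ {R : Type*} [Ring R] [Fintype R] [DecidableEq R] (k : ℕ) (r : R) :
    unitSumCount R (k + 1) r = ∑ x : Rˣ, unitSumCount R k (r - x) := by
  let e : {u : Fin (k + 1) → Rˣ // ∑ i, (u i : R) = r} ≃
      {c : Rˣ × (Fin k → Rˣ) // ∑ i, (c.2 i : R) = r - c.1} :=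
    Equiv.subtypeEquiv (Fin.consEquiv fun _ => Rˣ).symm fun u => by
      simp [Fin.sum_univ_succ, eq_sub_iff_add_eq', Fin.tail]
  exact (Nat.card_congr (e.trans (Equiv.subtypeProdEquivSigmaSubtype
    fun (x : Rˣ) (v : Fin k → Rˣ) => ∑ i, (v i : R) = r - x))).trans Nat.card_sigma

section Field

variable {F : Type*} [Field F] [Fintype F] [DecidableEq F]

theorem sum_units_ite_val_eq (r : F) :
    ∑ x : Fˣ, (if (x : F) = r then 1 else 0 : ℚ) = if r = 0 then 0 else 1 := by
  by_cases hr : r = 0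
  · simp [hr]
  · have hx : ∀ x : Fˣ, (x : F) = r ↔ x = Units.mk0 r hr := fun x => by
      rw [Units.ext_iff, Units.val_mk0]
    simp only [hx, Fintype.sum_ite_eq', hr, if_false]

theorem unitSumCount_field (k : ℕ) (r : F) :
    (unitSumCount F k r : ℚ) =
      (((Fintype.card F : ℚ) - 1) ^ k - (-1) ^ k) / Fintype.card F +
        (-1) ^ k * if r = 0 then 1 else 0 := by
  have hq : (Fintype.card F : ℚ) ≠ 0 := by positivity
  have hunits : (Fintype.card Fˣ : ℚ) = Fintype.card F - 1 := by
    rw [Fintype.card_units, Nat.cast_sub Fintype.card_pos]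
    simp
  induction k generalizing r with
  | zero => simp [unitSumCount_zero, sub_self]
  | succ k ih =>
    simp only [unitSumCount_succ, Nat.cast_sum, ih, sub_eq_zero, eq_comm (a := r),
      sum_add_distrib, ← mul_sum, sum_units_ite_val_eq, sum_const, card_univ, nsmul_eq_mul,
      hunits]
    split_ifs <;> field_simp <;> ring

end Field

namespace ZMod

theorem cast_eq_zero_iff_dvd_val {n : ℕ} [NeZero n] (p : ℕ) (r : ZMod n) :
    (r.cast : ZMod p) = 0 ↔ p ∣ r.val := by
  rw [cast_eq_val, natCast_eq_zero_iff]

noncomputable def equivPiPrimeFactors {n : ℕ} (hn : Squarefree n) :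
    ZMod n ≃+* ∀ p : n.primeFactors, ZMod p :=
  (ringEquivCongr ((prod_coe_sort n.primeFactors id).trans
    (Nat.prod_primeFactors_of_squarefree hn)).symm).trans
    (prodEquivPi (fun p : n.primeFactors => (p : ℕ)) fun p q hpq =>
      (Nat.coprime_primes (Nat.prime_of_mem_primeFactors p.2)
        (Nat.prime_of_mem_primeFactors q.2)).2 (Subtype.coe_injective.ne hpq))

theorem equivPiPrimeFactors_apply {n : ℕ} (hn : Squarefree n) (r : ZMod n)
    (p : n.primeFactors) : equivPiPrimeFactors hn r p = r.cast :=
  RingHom.congr_fun (RingHom.ext_zmod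
    ((Pi.evalRingHom _ p).comp (equivPiPrimeFactors hn).toRingHom)
    (castHom (Nat.dvd_of_mem_primeFactors p.2) _)) r

end ZMod

theorem unitSumCount_zmod_of_squarefree {n : ℕ} (hn : Squarefree n) (k : ℕ) (r : ZMod n) :
    (unitSumCount (ZMod n) k r : ℚ) =
      ∏ p ∈ n.primeFactors,
        ((((p : ℚ) - 1) ^ k - (-1) ^ k) / p + (-1) ^ k * if p ∣ r.val then 1 else 0) := by
  have : NeZero n := ⟨hn.ne_zero⟩
  rw [← unitSumCount_ringEquiv (ZMod.equivPiPrimeFactors hn), unitSumCount_pi, Nat.cast_prod,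
    ← prod_coe_sort n.primeFactors]
  refine prod_congr rfl fun p _ => ?_
  have : Fact (p : ℕ).Prime := ⟨Nat.prime_of_mem_primeFactors p.2⟩
  rw [ZMod.equivPiPrimeFactors_apply, unitSumCount_field, ZMod.card]
  simp only [ZMod.cast_eq_zero_iff_dvd_val]

theorem unit_sums_count_squarefree (n k : ℕ) (hn : Squarefree n) (hk : 0 < k)
    (r : ZMod n) :
    (Nat.card {u : Fin k → (ZMod n)ˣ // ∑ i, ((u i : ZMod n)) = r} : ℚ) =
      (∏ p ∈ n.primeFactors.filter (fun p => (p : ℕ) ∣ r.val),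
        ((p : ℚ) - 1) / p * (((p : ℚ) - 1) ^ (k - 1) - (-1) ^ (k - 1)))
      * ∏ p ∈ n.primeFactors.filter (fun p => ¬ (p : ℕ) ∣ r.val),
        (((p : ℚ) - 1) ^ k - (-1) ^ k) / p := by
  obtain ⟨k, rfl⟩ : ∃ j, k = j + 1 := ⟨k - 1, by omega⟩
  change (unitSumCount (ZMod n) (k + 1) r : ℚ) = _
  rw [unitSumCount_zmod_of_squarefree hn,
    ← prod_filter_mul_prod_filter_not n.primeFactors (fun p => p ∣ r.val)]
  congr 1 <;> refine prod_congr rfl fun p hp => ?_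
  · obtain ⟨hp, hpr⟩ := mem_filter.1 hp
    have hp0 : (p : ℚ) ≠ 0 := by exact_mod_cast (Nat.prime_of_mem_primeFactors hp).ne_zero
    rw [if_pos hpr, Nat.add_sub_cancel]
    field_simp
    ring
  · rw [if_neg (mem_filter.1 hp).2, mul_zero, add_zero]
end
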